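/- Inadmissibility of case (iv) shock-inside-rarefaction: let a : (0,∞) → ℝ be differentiable with a(r) > 0, and assume the Lagrangian wave speed g(r) := r·a(r) is strictly increasing on (0,∞). Let Ψ : (0,∞) → ℝ be differentiable with Ψ'(r) = a(r)²/r. Fix ρ⁻ > 0, set Q² := (ρ⁻·a(ρ⁻))², and define f(ρ) := Ψ(ρ) − Ψ(ρ⁻) + (Q²/2)(1/ρ² − 1/ρ⁻²). Then f(ρ) > 0 for all ρ > ρ⁻; i.e. the entropy jump term ⟦Ψ + ½(u−S)²⟧ is strictly positive, so the configuration violates the energy (entropy) inequality. -/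

import Mathlib

/-! Since `Ψ' = a² / ρ`, the derivative of `f` is `a(ρ)² / ρ - Q² / ρ³ = (g(ρ)² - g(ρ⁻)²) / ρ³`,
which is positive for `ρ > ρ⁻` because the Lagrangian wave speed `g` is positive and strictly
increasing. Hence `f` is strictly increasing on `[ρ⁻, ∞)`, and `f(ρ⁻) = 0`. -/

open Set

lemma strictMonoOn_Ici_of_hasDerivAt_pos {f f' : ℝ → ℝ} {c : ℝ}
    (hf : ∀ x ∈ Ici c, HasDerivAt f (f' x) x) (hf' : ∀ x ∈ Ioi c, 0 < f' x) :
    StrictMonoOn f (Ici c) := by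
  refine strictMonoOn_of_hasDerivWithinAt_pos (f' := f') (convex_Ici c)
    (fun x hx => (hf x hx).continuousAt.continuousWithinAt) (fun x hx => ?_) (fun x hx => ?_)
  all_goals rw [interior_Ici] at hx
  · exact (hf x (mem_Ici.2 hx.le)).hasDerivWithinAt
  · exact hf' x hx

lemma hasDerivAt_one_div_sq {x : ℝ} (hx : x ≠ 0) :
    HasDerivAt (fun ρ : ℝ => 1 / ρ ^ 2) (-2 / x ^ 3) x := by
  simp only [one_div]
  refine ((hasDerivAt_pow 2 x).inv (pow_ne_zero 2 hx)).congr_deriv ?_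
  field_simp
  ring

lemma hasDerivAt_sub_add_half_mul_one_div_sq_sub {Ψ : ℝ → ℝ} {ψ' x : ℝ} (k c m : ℝ)
    (hΨ : HasDerivAt Ψ ψ' x) (hx : x ≠ 0) :
    HasDerivAt (fun ρ => Ψ ρ - k + c / 2 * (1 / ρ ^ 2 - m)) (ψ' - c / x ^ 3) x := by
  refine ((hΨ.sub_const k).add
    (((hasDerivAt_one_div_sq hx).sub_const m).const_mul (c / 2))).congr_deriv ?_
  field_simp
  ring

lemma sq_div_sub_div_pow_three_pos {x A Q : ℝ} (hx : 0 < x) (h : Q < (x * A) ^ 2) :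
    0 < A ^ 2 / x - Q / x ^ 3 := by
  have hx' : x ≠ 0 := hx.ne'
  have hcommon : A ^ 2 / x - Q / x ^ 3 = ((x * A) ^ 2 - Q) / x ^ 3 := by
    field_simp
  rw [hcommon]
  exact div_pos (sub_pos.2 h) (by positivity)

theorem shock_in_rarefaction_case_iv_inadmissible_general
    (a : ℝ → ℝ)
    (hapos : ∀ r > (0 : ℝ), 0 < a r)
    (hg : StrictMonoOn (fun r => r * a r) (Set.Ioi (0 : ℝ)))
    (Ψ : ℝ → ℝ) (hΨ : ∀ r > (0 : ℝ), HasDerivAt Ψ (a r ^ 2 / r) r)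
    (ρm : ℝ) (hρm : 0 < ρm)
    (Qsq : ℝ) (hQsq : Qsq = (ρm * a ρm) ^ 2)
    (f : ℝ → ℝ)
    (hf : ∀ ρ, f ρ = Ψ ρ - Ψ ρm + Qsq / 2 * (1 / ρ ^ 2 - 1 / ρm ^ 2)) :
    ∀ ρ, ρm < ρ → 0 < f ρ := by
  intro ρ hρ
  have hderiv : ∀ x ∈ Ici ρm, HasDerivAt f (a x ^ 2 / x - Qsq / x ^ 3) x := fun x hx => by
    have hx : 0 < x := hρm.trans_le hx
    rw [funext hf]
    exact hasDerivAt_sub_add_half_mul_one_div_sq_sub _ _ _ (hΨ x hx) hx.ne'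
  have hslope : ∀ x ∈ Ioi ρm, 0 < a x ^ 2 / x - Qsq / x ^ 3 := fun x hx => by
    have hx0 : 0 < x := hρm.trans hx
    have hg_pos : 0 < ρm * a ρm := mul_pos hρm (hapos ρm hρm)
    refine sq_div_sub_div_pow_three_pos hx0 ?_
    rw [hQsq]
    exact pow_lt_pow_left₀ (hg hρm hx0 hx) hg_pos.le two_ne_zero
  have hf0 : f ρm = 0 := by
    rw [hf]
    ring
  have hlt := strictMonoOn_Ici_of_hasDerivAt_pos hderiv hslope self_mem_Ici (mem_Ici.2 hρ.le) hρ
  rwa [hf0] at hlt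

/-- Inadmissibility of the case (iv) shock-inside-rarefaction configuration: the entropy
jump term f(ρ) = Ψ(ρ) − Ψ(ρ⁻) + (Q²/2)(1/ρ² − 1/ρ⁻²) with Q² = (ρ⁻ a(ρ⁻))² is strictly
positive for ρ > ρ⁻, so the configuration violates the entropy inequality. -/
theorem shock_in_rarefaction_case_iv_inadmissible
    (a : ℝ → ℝ) (hadiff : ∀ r > (0 : ℝ), DifferentiableAt ℝ a r)
    (hapos : ∀ r > (0 : ℝ), 0 < a r)
    (hg : StrictMonoOn (fun r => r * a r) (Set.Ioi (0 : ℝ)))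
    (Ψ : ℝ → ℝ) (hΨ : ∀ r > (0 : ℝ), HasDerivAt Ψ (a r ^ 2 / r) r)
    (ρm : ℝ) (hρm : 0 < ρm)
    (Qsq : ℝ) (hQsq : Qsq = (ρm * a ρm) ^ 2)
    (f : ℝ → ℝ)
    (hf : ∀ ρ, f ρ = Ψ ρ - Ψ ρm + Qsq / 2 * (1 / ρ ^ 2 - 1 / ρm ^ 2)) :
    ∀ ρ, ρm < ρ → 0 < f ρ :=
  shock_in_rarefaction_case_iv_inadmissible_general a hapos hg Ψ hΨ ρm hρm Qsq hQsq f hf
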